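/- For every m ≥ 1, the kernel of the natural surjection mod Φ_m : ℤ̂[[t^ℤ̂]] → ℤ̂[t]/(Φ_m(t)) equals the principal ideal of ℤ̂[[t^ℤ̂]] generated by Φ_m(t). -/

import Mathlib

open Polynomial

set_option synthInstance.maxHeartbeats 1000000
set_option maxHeartbeats 1000000

noncomputable section
noncomputable section

/-- The ring of profinite integers `ẐZ = lim_n ℤ/nℤ`, realized as the subring of
`∏ n : ℕ+, ZMod n` consisting of families compatible under the natural projections. -/
def ZHatSubring : Subring (∀ n : ℕ+, ZMod n) where
  carrier := {f | ∀ (m n : ℕ+) (h : (m : ℕ) ∣ (n : ℕ)), ZMod.castHom h (ZMod m) (f n) = f m}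
  mul_mem' := fun {a b} ha hb m n h => by
    simp only [Pi.mul_apply, map_mul, ha m n h, hb m n h]
  one_mem' := fun m n h => map_one _
  add_mem' := fun {a b} ha hb m n h => by
    simp only [Pi.add_apply, map_add, ha m n h, hb m n h]
  zero_mem' := fun m n h => map_zero _
  neg_mem' := fun {a} ha m n h => by
    simp only [Pi.neg_apply, map_neg, ha m n h]

/-- The profinite integers as a type. -/
abbrev ZHat : Type := ZHatSubring

instance : CommRing ZHat := inferInstance

/-- The quotient ring `R[t]/(tⁿ - 1)`. -/
abbrev CycModN (R : Type) [CommRing R] (n : ℕ+) : Type :=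
  Polynomial R ⧸ Ideal.span {(X : Polynomial R) ^ (n : ℕ) - 1}

lemma X_pow_sub_one_dvd {R : Type} [CommRing R] {m n : ℕ} (h : m ∣ n) :
    (X : Polynomial R) ^ m - 1 ∣ (X : Polynomial R) ^ n - 1 := by
  obtain ⟨k, rfl⟩ := h
  simpa [pow_mul] using sub_dvd_pow_sub_pow ((X : Polynomial R) ^ m) 1 k

/-- The natural transition map `R[t]/(tⁿ-1) → R[t]/(tᵐ-1)` for `m ∣ n`. -/
def cycTransition (R : Type) [CommRing R] {m n : ℕ+} (h : (m : ℕ) ∣ (n : ℕ)) :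
    CycModN R n →+* CycModN R m :=
  Ideal.Quotient.factor
    (Ideal.span_singleton_le_span_singleton.mpr (X_pow_sub_one_dvd h))

/-- The completed group ring `R[[t^Ẑ]] = lim_n R[t]/(tⁿ-1)`, realized as the subring of
`∏ n : ℕ+, R[t]/(tⁿ-1)` of families compatible under the transition maps. -/
def CompletedCycRing (R : Type) [CommRing R] : Subring (∀ n : ℕ+, CycModN R n) where
  carrier := {f | ∀ (m n : ℕ+) (h : (m : ℕ) ∣ (n : ℕ)), cycTransition R h (f n) = f m}
  mul_mem' := fun {a b} ha hb m n h => by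
    simp only [Pi.mul_apply, map_mul, ha m n h, hb m n h]
  one_mem' := fun m n h => map_one _
  add_mem' := fun {a b} ha hb m n h => by
    simp only [Pi.add_apply, map_add, ha m n h, hb m n h]
  zero_mem' := fun m n h => map_zero _
  neg_mem' := fun {a} ha m n h => by
    simp only [Pi.neg_apply, map_neg, ha m n h]

instance completedCycRingCommRing (R : Type) [CommRing R] :
    CommRing (CompletedCycRing R) := inferInstance

/-- The natural ring homomorphism `R[t] → R[[t^Ẑ]]`, `f ↦ (f mod (tⁿ-1))ₙ`. -/
def polyToCompleted (R : Type) [CommRing R] : Polynomial R →+* CompletedCycRing R :=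
  RingHom.codRestrict (Pi.ringHom fun n => Ideal.Quotient.mk _) _
    (fun f m n h => by
      first | rfl | simp [cycTransition, RingHom.pi_apply, Ideal.Quotient.factor_mk])

/-- The natural ring homomorphism `ℤ[t] → R[[t^Ẑ]]`. -/
def intPolyEmb (R : Type) [CommRing R] : Polynomial ℤ →+* CompletedCycRing R :=
  (polyToCompleted R).comp (Polynomial.mapRingHom (Int.castRingHom R))


/-- The natural map `mod Φ_m : R[[t^Ẑ]] → R[t]/(Φ_m(t))`, obtained as the composite
`R[[t^Ẑ]] → R[t]/(tᵐ-1) → R[t]/(Φ_m(t))`. -/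
def modPhi (R : Type) [CommRing R] (m : ℕ+) :
    CompletedCycRing R →+* Polynomial R ⧸ Ideal.span {Polynomial.cyclotomic (m : ℕ) R} :=
  (Ideal.Quotient.factor (Ideal.span_singleton_le_span_singleton.mpr
      (Polynomial.cyclotomic.dvd_X_pow_sub_one (m : ℕ) R))).comp
    ((Pi.evalRingHom _ m).comp (CompletedCycRing R).subtype)

/-!
Let `f` lie in the kernel. At every finite level `(ZMod N)[t]/(tⁿ - 1)` the image of `f` is
divisible by `Φ_m`, since `f` is compatible along `tⁿ - 1 ∣ t^(nm) - 1` and `t^m - 1 ∣ t^(nm) - 1`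
and `f ≡ 0 mod Φ_m` at level `m`. The quotients are not unique (`Φ_m` is a zero divisor there),
but at each level they form a nonempty finite set, and these sets form an inverse system; by
König's lemma it has a compatible family of quotients. As `ZHat[[t^ZHat]]` is the inverse limit
of the finite rings `(ZMod N)[t]/(tⁿ - 1)`, that family is an element `g` with `f = Φ_m g`.
-/

section InverseSystem

variable {J : Type*} [Preorder J] [IsDirectedOrder J]

open CategoryTheory in
theorem InverseSystem.exists_compatible_of_finite {S : J → Type*} [∀ j, Finite (S j)]
    [∀ j, Nonempty (S j)]
    (π : ∀ ⦃i j⦄, i ≤ j → S j → S i) [InverseSystem π] :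
    ∃ s : ∀ j, S j, ∀ ⦃i j⦄ (h : i ≤ j), π h (s j) = s i := by
  let F : Jᵒᵖ ⥤ Type _ :=
    { obj := fun j => S j.unop
      map := fun h => TypeCat.ofHom (π (leOfHom h.unop))
      map_id := fun j => by ext x; exact InverseSystem.map_self x
      map_comp := fun f g => by ext x; exact (InverseSystem.map_map _ _ x).symm }
  have : ∀ j, Finite (F.obj j) := fun j => inferInstanceAs (Finite (S j.unop))
  have : ∀ j, Nonempty (F.obj j) := fun j => inferInstanceAs (Nonempty (S j.unop))
  obtain ⟨s, hs⟩ := nonempty_sections_of_finite_inverse_system F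
  exact ⟨fun j => s (Opposite.op j), fun i j h => hs (homOfLE h).op⟩

theorem InverseSystem.exists_compatible_mul_eq_of_dvd {A : J → Type*} [∀ j, Semigroup (A j)]
    [∀ j, Finite (A j)]
    (π : ∀ ⦃i j⦄, i ≤ j → A j → A i) [InverseSystem π]
    (hπ : ∀ ⦃i j⦄ (h : i ≤ j) (u v : A j), π h (u * v) = π h u * π h v)
    {a x : ∀ j, A j} (ha : ∀ ⦃i j⦄ (h : i ≤ j), π h (a j) = a i)
    (hx : ∀ ⦃i j⦄ (h : i ≤ j), π h (x j) = x i) (hdvd : ∀ j, a j ∣ x j) :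
    ∃ y : ∀ j, A j, (∀ ⦃i j⦄ (h : i ≤ j), π h (y j) = y i) ∧ ∀ j, x j = a j * y j := by
  let π' : ∀ ⦃i j⦄, i ≤ j → {y : A j // x j = a j * y} → {y : A i // x i = a i * y} :=
    fun i j h y => ⟨π h y, by rw [← hx h, ← ha h, ← hπ, ← y.2]⟩
  have : InverseSystem π' :=
    ⟨fun _ y => Subtype.ext (InverseSystem.map_self (f := π) y.1),
      fun _ _ _ hkj hji y => Subtype.ext (InverseSystem.map_map (f := π) hkj hji y.1)⟩
  have : ∀ j, Nonempty {y : A j // x j = a j * y} :=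
    fun j => (hdvd j).elim fun y hy => ⟨⟨y, hy⟩⟩
  obtain ⟨s, hs⟩ := InverseSystem.exists_compatible_of_finite π'
  exact ⟨fun j => (s j).1, fun i j h => congrArg Subtype.val (hs h), fun j => (s j).2⟩

end InverseSystem

namespace CycModN

variable {R S T : Type} [CommRing R] [CommRing S] [CommRing T]

lemma monic_X_pow_sub_one (n : ℕ+) : ((X : R[X]) ^ (n : ℕ) - 1).Monic := by
  simpa using monic_X_pow_sub_C (1 : R) n.ne_zero

lemma mk_eq_mk_iff {n : ℕ+} {p q : R[X]} :
    (Ideal.Quotient.mk _ p : CycModN R n) = Ideal.Quotient.mk _ q ↔ X ^ (n : ℕ) - 1 ∣ p - q := by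
  rw [Ideal.Quotient.eq, Ideal.mem_span_singleton]

def map (σ : R →+* S) {m n : ℕ+} (h : (m : ℕ) ∣ n) : CycModN R n →+* CycModN S m :=
  Ideal.quotientMap _ (mapRingHom σ) <| (Ideal.span_singleton_le_iff_mem _).mpr <| by
    simpa using Ideal.mem_span_singleton.mpr (X_pow_sub_one_dvd h)

lemma map_mk (σ : R →+* S) {m n : ℕ+} (h : (m : ℕ) ∣ n) (p : R[X]) :
    map σ h (Ideal.Quotient.mk _ p) = Ideal.Quotient.mk _ (p.map σ) :=
  Ideal.quotientMap_mk

lemma map_map (σ : R →+* S) (τ : S →+* T) {l m n : ℕ+} (hlm : (l : ℕ) ∣ m) (hmn : (m : ℕ) ∣ n)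
    (x : CycModN R n) : map τ hlm (map σ hmn x) = map (τ.comp σ) (hlm.trans hmn) x := by
  obtain ⟨p, rfl⟩ := Ideal.Quotient.mk_surjective x
  simp only [map_mk, Polynomial.map_map]

lemma map_id_apply {n : ℕ+} (x : CycModN R n) : map (RingHom.id R) dvd_rfl x = x := by
  obtain ⟨p, rfl⟩ := Ideal.Quotient.mk_surjective x
  rw [map_mk, Polynomial.map_id]

lemma map_cycTransition (σ : R →+* S) {m n : ℕ+} (h : (m : ℕ) ∣ n) (x : CycModN R n) :
    map σ dvd_rfl (cycTransition R h x) = map σ h x := by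
  obtain ⟨p, rfl⟩ := Ideal.Quotient.mk_surjective x
  rw [cycTransition, Ideal.Quotient.factor_mk, map_mk, map_mk]

def rep {n : ℕ+} (x : CycModN R n) : R[X] :=
  Function.surjInv Ideal.Quotient.mk_surjective x %ₘ (X ^ (n : ℕ) - 1)

lemma rep_mk {n : ℕ+} (p : R[X]) :
    rep (Ideal.Quotient.mk _ p : CycModN R n) = p %ₘ (X ^ (n : ℕ) - 1) :=
  modByMonic_eq_of_dvd_sub (monic_X_pow_sub_one n) <|
    mk_eq_mk_iff.mp (Function.surjInv_eq Ideal.Quotient.mk_surjective _)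

lemma mk_rep {n : ℕ+} (x : CycModN R n) : Ideal.Quotient.mk _ (rep x) = x := by
  obtain ⟨p, rfl⟩ := Ideal.Quotient.mk_surjective x
  rw [rep_mk, mk_eq_mk_iff]
  exact dvd_modByMonic_sub p _

lemma degree_rep_lt {n : ℕ+} (x : CycModN R n) : (rep x).degree < (n : ℕ) := by
  nontriviality R
  have hdeg : ((X : R[X]) ^ (n : ℕ) - 1).degree = (n : ℕ) := by
    simpa using degree_X_pow_sub_C (R := R) n.pos 1
  exact hdeg ▸ degree_modByMonic_lt
    (Function.surjInv Ideal.Quotient.mk_surjective x) (monic_X_pow_sub_one (R := R) n)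

lemma map_rep (σ : R →+* S) {n : ℕ+} (x : CycModN R n) :
    (rep x).map σ = rep (map σ dvd_rfl x) := by
  obtain ⟨p, rfl⟩ := Ideal.Quotient.mk_surjective x
  rw [map_mk, rep_mk, rep_mk, map_modByMonic _ (monic_X_pow_sub_one n)]
  simp

end CycModN

namespace ZHat

def proj (N : ℕ+) : ZHat →+* ZMod N :=
  (Pi.evalRingHom _ N).comp ZHatSubring.subtype

lemma castHom_comp_proj {M N : ℕ+} (h : (M : ℕ) ∣ N) :
    (ZMod.castHom h (ZMod M)).comp (proj N) = proj M :=
  RingHom.ext fun x => x.2 M N h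

lemma polynomial_ext_map_proj {p q : ZHat[X]} (h : ∀ N, p.map (proj N) = q.map (proj N)) :
    p = q := by
  ext i N
  change proj N (p.coeff i) = proj N (q.coeff i)
  rw [← coeff_map, h N, coeff_map]

lemma dvd_of_forall_map_proj_dvd {g p : ZHat[X]} (hg : g.Monic)
    (h : ∀ N, g.map (proj N) ∣ p.map (proj N)) : g ∣ p := by
  rw [← modByMonic_eq_zero_iff_dvd hg]
  refine polynomial_ext_map_proj fun N => ?_
  rw [map_modByMonic _ hg, Polynomial.map_zero, modByMonic_eq_zero_iff_dvd (hg.map _)]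
  exact h N

lemma exists_map_proj_eq {r : ∀ N : ℕ+, (ZMod N)[X]} {n : ℕ}
    (hr : ∀ (M N : ℕ+) (h : (M : ℕ) ∣ N), (r N).map (ZMod.castHom h (ZMod M)) = r M)
    (hdeg : ∀ N, (r N).degree < n) : ∃ p : ZHat[X], ∀ N, p.map (proj N) = r N := by
  let c (i : ℕ) : ZHat := ⟨fun N => (r N).coeff i, fun M N h => by
    change _ = (r M).coeff i
    rw [← hr M N h, coeff_map]⟩
  refine ⟨∑ i ∈ Finset.range n, monomial i (c i), fun N => ?_⟩
  ext i
  simp only [Polynomial.map_sum, map_monomial, finsetSum_coeff, coeff_monomial,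
    Finset.sum_ite_eq', Finset.mem_range]
  split_ifs with hi
  · rfl
  · exact (coeff_eq_zero_of_degree_lt ((hdeg N).trans_le (by exact_mod_cast not_lt.mp hi))).symm

end ZHat

namespace CycModN

lemma ext_map_proj {n : ℕ+} {x y : CycModN ZHat n}
    (h : ∀ N, map (ZHat.proj N) dvd_rfl x = map (ZHat.proj N) dvd_rfl y) : x = y := by
  obtain ⟨p, rfl⟩ := Ideal.Quotient.mk_surjective x
  obtain ⟨q, rfl⟩ := Ideal.Quotient.mk_surjective y
  refine mk_eq_mk_iff.mpr <| ZHat.dvd_of_forall_map_proj_dvd (monic_X_pow_sub_one n) fun N => ?_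
  simpa using mk_eq_mk_iff.mp ((map_mk _ _ _).symm.trans ((h N).trans (map_mk _ _ _)))

lemma exists_map_proj_eq {n : ℕ+} {y : ∀ N : ℕ+, CycModN (ZMod N) n}
    (hy : ∀ (M N : ℕ+) (h : (M : ℕ) ∣ N), map (ZMod.castHom h (ZMod M)) dvd_rfl (y N) = y M) :
    ∃ x : CycModN ZHat n, ∀ N, map (ZHat.proj N) dvd_rfl x = y N := by
  obtain ⟨p, hp⟩ := ZHat.exists_map_proj_eq (r := fun N => rep (y N))
    (fun M N h => by rw [map_rep, hy]) (fun N => degree_rep_lt (y N))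
  exact ⟨Ideal.Quotient.mk _ p, fun N => by rw [map_mk, hp, mk_rep]⟩

end CycModN

/-- Index of the finite quotient `(ZMod N)[t]/(tⁿ - 1)` of `ZHat[[t^ZHat]]`, ordered by
divisibility in both entries. -/
structure CycLevel where
  n : ℕ+
  N : ℕ+

namespace CycLevel

instance : Preorder CycLevel where
  le i j := (i.n : ℕ) ∣ j.n ∧ (i.N : ℕ) ∣ j.N
  le_refl _ := ⟨dvd_rfl, dvd_rfl⟩
  le_trans _ _ _ hij hjk := ⟨hij.1.trans hjk.1, hij.2.trans hjk.2⟩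

instance : IsDirectedOrder CycLevel where
  directed i j := ⟨⟨i.n * j.n, i.N * j.N⟩,
    ⟨by simp [dvd_mul_right], by simp [dvd_mul_right]⟩,
    ⟨by simp [dvd_mul_left], by simp [dvd_mul_left]⟩⟩

abbrev Obj (i : CycLevel) : Type := CycModN (ZMod i.N) i.n

instance (i : CycLevel) : Finite i.Obj :=
  have := (CycModN.monic_X_pow_sub_one (R := ZMod i.N) i.n).finite_quotient
  Module.finite_of_finite (ZMod i.N)

def transition {i j : CycLevel} (h : i ≤ j) : j.Obj →+* i.Obj :=
  CycModN.map (ZMod.castHom h.2 (ZMod i.N)) h.1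

instance : InverseSystem fun (i j : CycLevel) (h : i ≤ j) => ⇑(transition h) where
  map_self i x := by
    rw [transition, ZMod.castHom_self]
    exact CycModN.map_id_apply x
  map_map _ _ _ hkj hji x := by
    rw [transition, transition, CycModN.map_map, ZMod.castHom_comp]
    rfl

lemma transition_map_proj {i j : CycLevel} (h : i ≤ j) (x : CycModN ZHat j.n) :
    transition h (CycModN.map (ZHat.proj j.N) dvd_rfl x) = CycModN.map (ZHat.proj i.N) h.1 x := by
  rw [transition, CycModN.map_map, ZHat.castHom_comp_proj]

def toLevel (i : CycLevel) : CompletedCycRing ZHat →+* i.Obj :=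
  (CycModN.map (ZHat.proj i.N) dvd_rfl).comp
    ((Pi.evalRingHom _ i.n).comp (CompletedCycRing ZHat).subtype)

lemma transition_toLevel {i j : CycLevel} (h : i ≤ j) (f : CompletedCycRing ZHat) :
    transition h (toLevel j f) = toLevel i f := by
  change _ = CycModN.map (ZHat.proj i.N) dvd_rfl (f.1 i.n)
  rw [toLevel, RingHom.comp_apply, transition_map_proj, ← f.2 i.n j.n h.1,
    CycModN.map_cycTransition]
  rfl

lemma ext_toLevel {f g : CompletedCycRing ZHat} (h : ∀ i, toLevel i f = toLevel i g) : f = g :=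
  Subtype.ext <| funext fun n => CycModN.ext_map_proj fun N => h ⟨n, N⟩

lemma exists_toLevel_eq {y : ∀ i : CycLevel, i.Obj}
    (hy : ∀ ⦃i j⦄ (h : i ≤ j), transition h (y j) = y i) :
    ∃ f : CompletedCycRing ZHat, ∀ i, toLevel i f = y i := by
  choose x hx using fun n : ℕ+ => CycModN.exists_map_proj_eq (y := fun N => y ⟨n, N⟩)
    fun M N h => hy (i := ⟨n, M⟩) (j := ⟨n, N⟩) ⟨dvd_rfl, h⟩
  refine ⟨⟨x, fun m n h => CycModN.ext_map_proj fun N => ?_⟩, fun i => hx i.n i.N⟩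
  rw [CycModN.map_cycTransition, hx, ← transition_map_proj (i := ⟨m, N⟩) (j := ⟨n, N⟩)
    ⟨h, dvd_rfl⟩, hx]
  exact hy _

end CycLevel

lemma modPhi_eq_mk {R : Type} [CommRing R] {m : ℕ+} {f : CompletedCycRing R} {F : R[X]}
    (hF : f.1 m = Ideal.Quotient.mk _ F) : modPhi R m f = Ideal.Quotient.mk _ F := by
  simp only [modPhi, RingHom.comp_apply, Pi.evalRingHom_apply, Subring.coe_subtype]
  rw [hF, Ideal.Quotient.factor_mk]

lemma intPolyEmb_cyclotomic_dvd_of_modPhi_eq_zero {R : Type} [CommRing R] {m : ℕ+}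
    {f : CompletedCycRing R} (hf : modPhi R m f = 0) (n : ℕ+) :
    (intPolyEmb R (cyclotomic m ℤ)).1 n ∣ f.1 n := by
  obtain ⟨F, hF⟩ := Ideal.Quotient.mk_surjective (f.1 (n * m))
  have hf_eq (k : ℕ+) (hk : (k : ℕ) ∣ (n * m : ℕ+)) : f.1 k = Ideal.Quotient.mk _ F := by
    rw [← f.2 k (n * m) hk, ← hF]
    exact Ideal.Quotient.factor_mk _ _
  obtain ⟨Q, rfl⟩ : cyclotomic m R ∣ F := by
    rw [← Ideal.mem_span_singleton, ← Ideal.Quotient.eq_zero_iff_mem, ← hf,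
      modPhi_eq_mk (hf_eq m (by simp))]
  refine ⟨Ideal.Quotient.mk _ Q, ?_⟩
  change f.1 n = Ideal.Quotient.mk _ ((cyclotomic m ℤ).map (Int.castRingHom R)) * _
  rw [map_cyclotomic_int, ← map_mul, hf_eq n (by simp)]

lemma modPhi_intPolyEmb_cyclotomic (R : Type) [CommRing R] (m : ℕ+) :
    modPhi R m (intPolyEmb R (cyclotomic m ℤ)) = 0 := by
  rw [modPhi_eq_mk rfl, coe_mapRingHom, map_cyclotomic_int, Ideal.Quotient.eq_zero_iff_mem]
  exact Ideal.mem_span_singleton_self _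

/-- For every `m ≥ 1`, the kernel of the natural surjection
`mod Φ_m : Ẑ[[t^Ẑ]] → Ẑ[t]/(Φ_m(t))` equals the principal ideal generated by `Φ_m(t)`. -/
theorem ker_modPhi_eq_span_cyclotomic_zhat (m : ℕ+) :
    RingHom.ker (modPhi ZHat m)
      = Ideal.span {intPolyEmb ZHat (cyclotomic (m : ℕ) ℤ)} := by
  refine le_antisymm (fun f hf => ?_) ?_
  · have hdvd (i : CycLevel) :
        i.toLevel (intPolyEmb ZHat (cyclotomic m ℤ)) ∣ i.toLevel f :=
      map_dvd (CycModN.map (ZHat.proj i.N) dvd_rfl)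
        (intPolyEmb_cyclotomic_dvd_of_modPhi_eq_zero hf i.n)
    obtain ⟨y, hy, hfy⟩ := InverseSystem.exists_compatible_mul_eq_of_dvd
      (fun _ _ h => ⇑(CycLevel.transition h)) (fun _ _ h => map_mul (CycLevel.transition h))
      (fun _ _ h => CycLevel.transition_toLevel h _)
      (fun _ _ h => CycLevel.transition_toLevel h _) hdvd
    obtain ⟨g, hg⟩ := CycLevel.exists_toLevel_eq hy
    exact Ideal.mem_span_singleton.mpr
      ⟨g, CycLevel.ext_toLevel fun i => by rw [map_mul, hg, hfy]⟩
  · rw [Ideal.span_le, Set.singleton_subset_iff]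
    exact modPhi_intPolyEmb_cyclotomic ZHat m
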